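/- arXiv:1305.1265 — 3 statements merged into one kernel-verified Lean document; each statement's English description precedes it below -/
import Mathlib

section
/- Let d ≥ 4 be an integer, set k = d−1, let c > 0 be a real number, and let i be an integer with 3 ≤ i ≤ d−1. Then −i(i−2)·(2d−3)(3d−2) + (i(i−1)/2)·3(d−2)(4d−3) + γ_i/c > (6d² + d − 6)·i·(2d−2−i)/(4d−3). -/
/-!
Since `c > 0`, it suffices that `γ_i ≥ 0` and that the polynomial part alone beats the right side.

`γ_i ≥ 0`: writing `k = l + m + 1`, the factorial quotient in the `l`-th summand equals
`C(2l,l) C(2m,m) / ((l+1)(m+1)²(m+2))`, while the leading coefficient is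
`C(2l+2m,l+m) / (l+m+1)`; Vandermonde gives `C(2l,l) C(2m,m) ≤ C(2l+2m,l+m)`, so each of the
`⌊(i-2)/2⌋` summands is at most `2(i-1)` times the leading coefficient.
The remaining polynomial inequality becomes, after the substitution `i = a + 3`, `d = a + b + 4`,
the positivity of `i/2` times a polynomial in `a, b ≥ 0` with positive coefficients.
-/

open Finset

/-- The coefficient `γ_i` (for `k ≥ 2`, `i ≥ 3`) from the Eisenbud–Harris
formula for the Petri divisor. -/
def gammaEH (k i : ℕ) : ℚ :=
  ((i : ℚ) - 1) * ((i : ℚ) - 2) * (Nat.factorial (2 * k - 2)) /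
      ((Nat.factorial k) * (Nat.factorial (k - 1)))
    - ∑ l ∈ Finset.Icc 1 ((i - 2) / 2),
        2 * ((i : ℚ) - 1 - 2 * (l : ℚ)) * (Nat.factorial (2 * l)) *
            (Nat.factorial (2 * k - 2 - 2 * l)) /
          ((Nat.factorial (l + 1)) * (Nat.factorial l) * (Nat.factorial (k - l)) *
            (Nat.factorial (k - l + 1)))

namespace Nat

theorem centralBinom_mul_factorial_mul_factorial (n : ℕ) :
    centralBinom n * n ! * n ! = (2 * n)! := by
  rw [centralBinom_eq_two_mul_choose, two_mul, add_choose_mul_factorial_mul_factorial]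

theorem centralBinom_mul_centralBinom_le (l m : ℕ) :
    centralBinom l * centralBinom m ≤ centralBinom (l + m) := by
  rw [centralBinom_eq_two_mul_choose, centralBinom_eq_two_mul_choose,
    centralBinom_eq_two_mul_choose, mul_add, add_choose_eq]
  exact single_le_sum (f := fun ij : ℕ × ℕ => (2 * l).choose ij.1 * (2 * m).choose ij.2)
    (fun _ _ => Nat.zero_le _) (mem_antidiagonal.mpr rfl : (l, m) ∈ antidiagonal (l + m))

theorem factorial_two_mul_mul_factorial_two_mul_le (l m : ℕ) :
    (2 * l)! * (2 * m)! * ((l + m + 1)! * (l + m)!) ≤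
      (2 * (l + m))! * ((l + 1)! * l ! * (m + 1)! * (m + 2)!) := by
  rw [← centralBinom_mul_factorial_mul_factorial l, ← centralBinom_mul_factorial_mul_factorial m,
    ← centralBinom_mul_factorial_mul_factorial (l + m)]
  have hcoeff : l + m + 1 ≤ (l + 1) * (m + 1) * (m + 1) * (m + 2) :=
    calc l + m + 1 ≤ (l + 1) * (m + 1) := by nlinarith
      _ ≤ (l + 1) * (m + 1) * ((m + 1) * (m + 2)) := Nat.le_mul_of_pos_right _ (by positivity)
      _ = _ := by ring
  calc _ = centralBinom l * centralBinom m * (l + m + 1) * (l ! * m ! * (l + m)!) ^ 2 := by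
        rw [factorial_succ (l + m)]; ring
    _ ≤ centralBinom (l + m) * ((l + 1) * (m + 1) * (m + 1) * (m + 2)) *
          (l ! * m ! * (l + m)!) ^ 2 := by
        gcongr
        exact centralBinom_mul_centralBinom_le l m
    _ = _ := by simp only [factorial_succ]; ring

end Nat

open Nat in
theorem factorial_quotient_le_of_lt {k l : ℕ} (hl : l < k) :
    ((2 * l)! * (2 * k - 2 - 2 * l)! : ℚ) / ((l + 1)! * l ! * (k - l)! * (k - l + 1)!) ≤
      (2 * k - 2)! / (k ! * (k - 1)!) := by
  obtain ⟨m, rfl⟩ : ∃ m, k = l + m + 1 := ⟨k - l - 1, by omega⟩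
  rw [show 2 * (l + m + 1) - 2 - 2 * l = 2 * m by omega, show l + m + 1 - l = m + 1 by omega,
    show 2 * (l + m + 1) - 2 = 2 * (l + m) by omega, show l + m + 1 - 1 = l + m by omega,
    div_le_div_iff₀ (by positivity) (by positivity)]
  exact_mod_cast factorial_two_mul_mul_factorial_two_mul_le l m

theorem gammaEH_nonneg {k i : ℕ} (hi : i ≤ 2 * k) : 0 ≤ gammaEH k i := by
  set C : ℚ := (Nat.factorial (2 * k - 2)) / ((Nat.factorial k) * (Nat.factorial (k - 1)))
  have hC : 0 ≤ C := by positivity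
  have hterm : ∀ l ∈ Icc 1 ((i - 2) / 2),
      2 * ((i : ℚ) - 1 - 2 * (l : ℚ)) * (Nat.factorial (2 * l)) *
          (Nat.factorial (2 * k - 2 - 2 * l)) /
        ((Nat.factorial (l + 1)) * (Nat.factorial l) * (Nat.factorial (k - l)) *
          (Nat.factorial (k - l + 1))) ≤ 2 * ((i : ℚ) - 1) * C := by
    intro l hl
    obtain ⟨hl1, hl2⟩ := mem_Icc.mp hl
    have h2l : (2 * l : ℚ) + 2 ≤ i := by exact_mod_cast (by omega : 2 * l + 2 ≤ i)
    rw [mul_assoc, mul_div_assoc]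
    exact mul_le_mul (by linarith) (factorial_quotient_le_of_lt (k := k) (l := l) (by omega))
      (by positivity) (by linarith)
  have hsum := sum_le_card_nsmul _ _ _ hterm
  rw [Nat.card_Icc, Nat.add_sub_cancel, nsmul_eq_mul] at hsum
  have hcount :
      (((i - 2) / 2 : ℕ) : ℚ) * (2 * ((i : ℚ) - 1)) ≤ ((i : ℚ) - 1) * ((i : ℚ) - 2) := by
    rcases lt_or_ge i 2 with h | h
    · interval_cases i <;> norm_num
    · have h2q : ((2 * ((i - 2) / 2) + 2 : ℕ) : ℚ) ≤ i := by
        exact_mod_cast (by omega : 2 * ((i - 2) / 2) + 2 ≤ i)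
      have hi1 : (1 : ℚ) ≤ i := by exact_mod_cast (by omega : 1 ≤ i)
      push_cast at h2q
      nlinarith
  rw [gammaEH, sub_nonneg]
  calc _ ≤ _ := hsum
    _ = (((i - 2) / 2 : ℕ) : ℚ) * (2 * ((i : ℚ) - 1)) * C := by ring
    _ ≤ ((i : ℚ) - 1) * ((i : ℚ) - 2) * C := mul_le_mul_of_nonneg_right hcount hC
    _ = _ := mul_div_assoc _ _ _ |>.symm

theorem petri_polynomial_gap {x y : ℝ} (hx : 3 ≤ x) (hxy : x + 1 ≤ y) :
    (6 * y ^ 2 + y - 6) * x * (2 * y - 2 - x) / (4 * y - 3) <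
      -x * (x - 2) * ((2 * y - 3) * (3 * y - 2)) +
        (x * (x - 1) / 2) * (3 * (y - 2) * (4 * y - 3)) := by
  obtain ⟨a, ha, rfl⟩ : ∃ a, 0 ≤ a ∧ x = a + 3 := ⟨x - 3, by linarith, by ring⟩
  obtain ⟨b, hb, rfl⟩ : ∃ b, 0 ≤ b ∧ y = a + b + 4 := ⟨y - a - 4, by linarith, by ring⟩
  rw [div_lt_iff₀ (by linarith)]
  have hgap : 0 < (a + 3) * (164 + 282 * b + 148 * b ^ 2 + 24 * b ^ 3 + 184 * a + 215 * a * b +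
      56 * a * b ^ 2 + 67 * a ^ 2 + 40 * a ^ 2 * b + 8 * a ^ 3) := by positivity
  linear_combination hgap / 2

theorem stmt_2_general (d : ℕ) (c : ℝ) (hc : 0 < c)
    (i : ℕ) (h3 : 3 ≤ i) (hi : i ≤ d - 1) :
    -(i : ℝ) * ((i : ℝ) - 2) * ((2 * (d : ℝ) - 3) * (3 * (d : ℝ) - 2))
        + ((i : ℝ) * ((i : ℝ) - 1) / 2) * (3 * ((d : ℝ) - 2) * (4 * (d : ℝ) - 3))
        + (gammaEH (d - 1) i : ℝ) / c
      > (6 * (d : ℝ) ^ 2 + (d : ℝ) - 6) * (i : ℝ) * (2 * (d : ℝ) - 2 - (i : ℝ))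
          / (4 * (d : ℝ) - 3) := by
  have hγ : 0 ≤ (gammaEH (d - 1) i : ℝ) / c :=
    div_nonneg (by exact_mod_cast gammaEH_nonneg (by omega)) hc.le
  have hi3 : (3 : ℝ) ≤ i := by exact_mod_cast h3
  have hid : (i : ℝ) + 1 ≤ d := by exact_mod_cast (by omega : i + 1 ≤ d)
  linarith [petri_polynomial_gap hi3 hid]

theorem stmt_2 (d : ℕ) (hd : 4 ≤ d) (c : ℝ) (hc : 0 < c)
    (i : ℕ) (h3 : 3 ≤ i) (hi : i ≤ d - 1) :
    -(i : ℝ) * ((i : ℝ) - 2) * ((2 * (d : ℝ) - 3) * (3 * (d : ℝ) - 2))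
        + ((i : ℝ) * ((i : ℝ) - 1) / 2) * (3 * ((d : ℝ) - 2) * (4 * (d : ℝ) - 3))
        + (gammaEH (d - 1) i : ℝ) / c
      > (6 * (d : ℝ) ^ 2 + (d : ℝ) - 6) * (i : ℝ) * (2 * (d : ℝ) - 2 - (i : ℝ))
          / (4 * (d : ℝ) - 3) :=
  stmt_2_general d c hc i h3 hi
end

section
/- Let k ≥ 4 be an integer and let i be an integer with 4 ≤ i ≤ k. Then c_i ≥ 0, where c_i = (i−2)·(2k−2)!/(k!·(k−1)!) − Σ_{l=1}^{⌊(i−2)/2⌋} (2l)!·(2k−2−2l)!/((l+1)!·l!·(k−l)!·(k−l+1)!) is a rational number. -/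
/-!
The leading coefficient of `c_i` is `(i - 2) · Cat(k - 1)`, and the `l`-th summand is
`Cat(l) · Cat(s) / ((s + 1)(s + 2)) ≤ Cat(l) · Cat(s)` with `s = k - 1 - l`. Catalan numbers are
supermultiplicative, `Cat(l) · Cat(s) ≤ Cat(l + s)`: by Vandermonde's identity
`C(2l, l) · C(2s, s) ≤ C(2l + 2s, l + s)`, and `l + s + 1 ≤ (l + 1)(s + 1)`. So every summand is
at most `Cat(k - 1)`, and there are only `⌊(i - 2)/2⌋ ≤ i - 2` of them.
-/

open Finset

/-- `c_i = (i−2)·(2k−2)!/(k!·(k−1)!) − Σ_{l=1}^{⌊(i−2)/2⌋} (2l)!·(2k−2−2l)!/((l+1)!·l!·(k−l)!·(k−l+1)!)`. -/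
def cEH (k i : ℕ) : ℚ :=
  ((i : ℚ) - 2) * (Nat.factorial (2 * k - 2)) /
      ((Nat.factorial k) * (Nat.factorial (k - 1)))
    - ∑ l ∈ Finset.Icc 1 ((i - 2) / 2),
        (Nat.factorial (2 * l)) * (Nat.factorial (2 * k - 2 - 2 * l)) /
          ((Nat.factorial (l + 1)) * (Nat.factorial l) * (Nat.factorial (k - l)) *
            (Nat.factorial (k - l + 1)))

open Nat

theorem Nat.choose_mul_choose_le_choose_add (m n a b : ℕ) :
    m.choose a * n.choose b ≤ (m + n).choose (a + b) := by
  rw [Nat.add_choose_eq]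
  exact single_le_sum (f := fun ij => m.choose ij.1 * n.choose ij.2) (a := (a, b))
    (fun _ _ => Nat.zero_le _) (mem_antidiagonal.2 rfl)

theorem Nat.centralBinom_mul_centralBinom_le_s7 (a b : ℕ) :
    a.centralBinom * b.centralBinom ≤ (a + b).centralBinom := by
  simpa only [centralBinom_eq_two_mul_choose, mul_add] using
    choose_mul_choose_le_choose_add (2 * a) (2 * b) a b

theorem catalan_mul_catalan_le (a b : ℕ) : catalan a * catalan b ≤ catalan (a + b) := by
  have hpos : 0 < (a + 1) * (b + 1) := by positivity
  refine Nat.le_of_mul_le_mul_left ?_ hpos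
  calc (a + 1) * (b + 1) * (catalan a * catalan b)
      = a.centralBinom * b.centralBinom := by
        rw [← succ_mul_catalan_eq_centralBinom, ← succ_mul_catalan_eq_centralBinom]; ring
    _ ≤ (a + b).centralBinom := centralBinom_mul_centralBinom_le_s7 a b
    _ = (a + b + 1) * catalan (a + b) := (succ_mul_catalan_eq_centralBinom _).symm
    _ ≤ (a + 1) * (b + 1) * catalan (a + b) := by gcongr; nlinarith

theorem catalan_mul_factorial_mul_factorial (n : ℕ) :
    catalan n * (n + 1)! * n ! = (2 * n)! := by
  have h := choose_mul_factorial_mul_factorial (by omega : n ≤ 2 * n)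
  rw [show 2 * n - n = n by omega, ← centralBinom_eq_two_mul_choose,
    ← succ_mul_catalan_eq_centralBinom] at h
  rw [← h, factorial_succ]
  ring

theorem catalan_eq_factorial_div {K : Type*} [Field K] [CharZero K] (n : ℕ) :
    (catalan n : K) = (2 * n)! / ((n + 1)! * n !) := by
  rw [eq_div_iff (by norm_cast; positivity), ← mul_assoc]
  exact_mod_cast catalan_mul_factorial_mul_factorial n

-- The summands of `cEH` are divisions in `ℕ`, i.e. rounded down.
theorem cEH_summand_le_catalan {k l : ℕ} (hl : l < k) :
    (2 * l)! * (2 * k - 2 - 2 * l)! / ((l + 1)! * l ! * (k - l)! * (k - l + 1)!)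
      ≤ catalan (k - 1) := by
  obtain ⟨s, rfl⟩ := Nat.exists_eq_add_of_lt hl
  rw [show 2 * (l + s + 1) - 2 - 2 * l = 2 * s by omega, show l + s + 1 - l = s + 1 by omega,
    show l + s + 1 - 1 = l + s by omega]
  refine (Nat.div_le_of_le_mul ?_).trans (catalan_mul_catalan_le l s)
  calc (2 * l)! * (2 * s)!
      = (l + 1)! * l ! * (s + 1)! * s ! * (catalan l * catalan s) := by
        rw [← catalan_mul_factorial_mul_factorial, ← catalan_mul_factorial_mul_factorial]; ring
    _ ≤ (l + 1)! * l ! * (s + 1)! * (s + 1 + 1)! * (catalan l * catalan s) := by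
        gcongr; omega

theorem stmt_7_general (k : ℕ) (i : ℕ) (h4 : 4 ≤ i) (hi : i ≤ k) :
    0 ≤ cEH k i := by
  have hsum : ∑ l ∈ Icc 1 ((i - 2) / 2),
      (2 * l)! * (2 * k - 2 - 2 * l)! / ((l + 1)! * l ! * (k - l)! * (k - l + 1)!)
        ≤ (i - 2) / 2 * catalan (k - 1) := by
    simpa using sum_le_card_nsmul _ _ _ fun l (hl : l ∈ Icc 1 ((i - 2) / 2)) =>
      cEH_summand_le_catalan (by rw [mem_Icc] at hl; omega)
  have hcatalan : (catalan (k - 1) : ℚ) = (2 * k - 2)! / (k ! * (k - 1)!) := by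
    rw [catalan_eq_factorial_div, show 2 * (k - 1) = 2 * k - 2 by omega,
      show k - 1 + 1 = k by omega]
  have hcount : (((i - 2) / 2 : ℕ) : ℚ) ≤ i - 2 := by
    rw [le_sub_iff_add_le]
    exact_mod_cast (by omega : (i - 2) / 2 + 2 ≤ i)
  rw [cEH, sub_nonneg, mul_div_assoc, ← hcatalan]
  calc _ ≤ (((i - 2) / 2 * catalan (k - 1) : ℕ) : ℚ) := by exact_mod_cast hsum
    _ ≤ _ := by push_cast; gcongr

theorem stmt_7 (k : ℕ) (hk : 4 ≤ k) (i : ℕ) (h4 : 4 ≤ i) (hi : i ≤ k) :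
    0 ≤ cEH k i :=
  stmt_7_general k i h4 hi
end

section
/- Let k ≥ 6 be an integer and let h be an integer with 2 ≤ h ≤ ⌊(k−2)/2⌋. Then (2k−2)!/(k!·(k−1)!) ≥ (2h)!·(2k−2−2h)!/((h+1)!·h!·(k−h)!·(k−h+1)!), as rational numbers. -/
/-!
Put `m = k - 1 - h`. The left side is the Catalan number `C (h + m)` and the right side is
`C h * C m / ((m + 1) * (m + 2))`. The product `C h * C m` is one term of Segner's recursion for
`C (h + m + 1)`, and consecutive Catalan numbers grow by a factor less than `4`, so
`C h * C m ≤ 4 * C (h + m) ≤ (m + 1) * (m + 2) * C (h + m)` once `m ≥ 1`.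
-/

open Nat Finset

lemma cast_catalan_eq_factorial_div (n : ℕ) :
    (catalan n : ℚ) = (2 * n)! / ((n + 1)! * n !) := by
  have hfact : (n + 1) * catalan n * (n ! * n !) = (2 * n)! := by
    rw [succ_mul_catalan_eq_centralBinom, centralBinom_eq_two_mul_choose, ← mul_assoc]
    simpa [two_mul] using choose_mul_factorial_mul_factorial (le_add_right n n)
  rw [eq_div_iff (by positivity), factorial_succ, ← hfact]
  push_cast
  ring

lemma catalan_mul_le_catalan_succ (h m : ℕ) : catalan h * catalan m ≤ catalan (h + m + 1) := by
  rw [catalan_succ']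
  exact single_le_sum (f := fun ij : ℕ × ℕ => catalan ij.1 * catalan ij.2)
    (fun _ _ => Nat.zero_le _) (a := (h, m)) (mem_antidiagonal.mpr rfl)

lemma catalan_succ_le_four_mul (n : ℕ) : catalan (n + 1) ≤ 4 * catalan n := by
  have hrec : (n + 1) * ((n + 2) * catalan (n + 1)) = (n + 1) * (2 * (2 * n + 1) * catalan n) := by
    rw [succ_mul_catalan_eq_centralBinom, succ_mul_centralBinom_succ,
      ← succ_mul_catalan_eq_centralBinom]
    ring
  have hratio := Nat.eq_of_mul_eq_mul_left (succ_pos n) hrec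
  nlinarith

lemma catalan_mul_le (h m : ℕ) : catalan h * catalan m ≤ (m + 1) * (m + 2) * catalan (h + m) := by
  rcases m with _ | m
  · rw [catalan_zero, add_zero]
    omega
  · calc catalan h * catalan (m + 1) ≤ catalan (h + (m + 1) + 1) := catalan_mul_le_catalan_succ _ _
      _ ≤ 4 * catalan (h + (m + 1)) := catalan_succ_le_four_mul _
      _ ≤ (m + 1 + 1) * (m + 1 + 2) * catalan (h + (m + 1)) := by gcongr; nlinarith

lemma factorial_ratio_eq_catalan_mul_catalan (h m : ℕ) :
    ((2 * h)! * (2 * m)! : ℚ) / ((h + 1)! * h ! * (m + 1)! * (m + 1 + 1)!) =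
      catalan h * catalan m / ((m + 1) * (m + 2)) := by
  rw [cast_catalan_eq_factorial_div, cast_catalan_eq_factorial_div, factorial_succ (m + 1),
    factorial_succ m]
  push_cast
  field_simp
  ring

theorem stmt_8_general (k : ℕ) (h : ℕ) (hh : h ≤ (k - 2) / 2) :
    ((Nat.factorial (2 * k - 2)) : ℚ) / ((Nat.factorial k) * (Nat.factorial (k - 1)))
      ≥ (Nat.factorial (2 * h)) * (Nat.factorial (2 * k - 2 - 2 * h)) /
          ((Nat.factorial (h + 1)) * (Nat.factorial h) * (Nat.factorial (k - h)) *
            (Nat.factorial (k - h + 1))) := by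
  rcases eq_or_ne k 0 with rfl | hk
  · obtain rfl : h = 0 := by omega
    -- truncated subtraction makes both sides `1`
    simp
  obtain ⟨m, rfl⟩ : ∃ m, k = h + m + 1 := ⟨k - h - 1, by omega⟩
  rw [show 2 * (h + m + 1) - 2 = 2 * (h + m) by omega, show 2 * (h + m) - 2 * h = 2 * m by omega,
    show h + m + 1 - 1 = h + m by omega, show h + m + 1 - h = m + 1 by omega,
    ← cast_catalan_eq_factorial_div, factorial_ratio_eq_catalan_mul_catalan, ge_iff_le,
    div_le_iff₀' (by positivity)]
  exact_mod_cast catalan_mul_le h m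

theorem stmt_8 (k : ℕ) (hk : 6 ≤ k) (h : ℕ) (h2 : 2 ≤ h) (hh : h ≤ (k - 2) / 2) :
    ((Nat.factorial (2 * k - 2)) : ℚ) / ((Nat.factorial k) * (Nat.factorial (k - 1)))
      ≥ (Nat.factorial (2 * h)) * (Nat.factorial (2 * k - 2 - 2 * h)) /
          ((Nat.factorial (h + 1)) * (Nat.factorial h) * (Nat.factorial (k - h)) *
            (Nat.factorial (k - h + 1))) :=
  stmt_8_general k h hh
end
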